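/- arXiv:2402.06856 — 7 statements merged into one kernel-verified Lean document; each statement's English description precedes it below -/
import Mathlib

section
/- For all real numbers x and y with x + y ≥ 0, one has tanh x · tanh y ≤ (tanh((x+y)/2))². -/
theorem tanh_mul_tanh_le (x y : ℝ) (h : x + y ≥ 0) :
    Real.tanh x * Real.tanh y ≤ (Real.tanh ((x + y) / 2)) ^ 2 := by
  have ha := Real.exp_pos x
  have hb := Real.exp_pos y
  have hc := Real.exp_pos ((x + y) / 2)
  have hab : Real.exp ((x + y) / 2) ^ 2 = Real.exp x * Real.exp y := by
    rw [sq, ← Real.exp_add, add_halves, Real.exp_add]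
  simp only [Real.tanh_eq_sinh_div_cosh, Real.sinh_eq, Real.cosh_eq, Real.exp_neg]
  set a := Real.exp x
  set b := Real.exp y
  set c := Real.exp ((x + y) / 2)
  have h1 : (0:ℝ) < a + a⁻¹ := by positivity
  have h2 : (0:ℝ) < b + b⁻¹ := by positivity
  have h3 : (0:ℝ) < c + c⁻¹ := by positivity
  rw [div_mul_div_comm, div_pow, div_le_div_iff₀ (by positivity) (by positivity)]
  field_simp
  have hcc : c * c = a * b := by rw [← sq]; exact hab
  have key : (a * a - 1) * (b * b - 1) * (a * b + 1) ^ 2 ≤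
      (a * b - 1) ^ 2 * ((a * a + 1) * (b * b + 1)) := by
    nlinarith [mul_nonneg (sq_nonneg (a - b)) (by positivity : (0:ℝ) ≤ a^2*b^2 + 1)]
  have hpos : (0:ℝ) ≤ (c * 2) ^ 2 * (a * 2 * (b * 2)) := by positivity
  rw [hab]
  nlinarith [key, mul_le_mul_of_nonneg_right key hpos]
end

section
/- For every real s ≥ 0, g(s) ≤ tanh s; in particular, for every s > 0 one has g(s) < s. -/
open MeasureTheory ProbabilityTheory

lemma tanh_exp_form (x : ℝ) :
    Real.tanh x = (Real.exp (2*x) - 1) / (Real.exp (2*x) + 1) := by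
  rw [Real.tanh_eq_sinh_div_cosh, Real.sinh_eq, Real.cosh_eq]
  have h : Real.exp (2*x) = Real.exp x * Real.exp x := by
    rw [← Real.exp_add]; ring_nf
  have h2 : Real.exp (-x) = (Real.exp x)⁻¹ := Real.exp_neg x
  have hx := Real.exp_pos x
  rw [h, h2]
  field_simp

lemma pair_ineq (u v : ℝ) (hu : 1 ≤ u) (hv : 0 < v) :
    (u*v - 1)/(u*v + 1) + (u/v - 1)/(u/v + 1) ≤ 2 * ((u - 1)/(u + 1)) := by
  have h3 : (u/v - 1)/(u/v + 1) = (u - v)/(u + v) := by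
    have hv' : v ≠ 0 := ne_of_gt hv
    have huv' : u + v ≠ 0 := by positivity
    field_simp
  rw [h3]
  have huv : 0 < u * v + 1 := by positivity
  have huv2 : 0 < u + v := by linarith
  have hu1 : 0 < u + 1 := by linarith
  rw [div_add_div _ _ (ne_of_gt huv) (ne_of_gt huv2), ← mul_div_assoc,
    div_le_div_iff₀ (by positivity) hu1]
  nlinarith [mul_nonneg (sub_nonneg.2 hu) (sq_nonneg (v-1)), mul_pos hv huv2]

lemma tanh_pair_le (s a : ℝ) (hs : 0 ≤ s) :
    Real.tanh (s + a) + Real.tanh (s - a) ≤ 2 * Real.tanh s := by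
  have hu : (1:ℝ) ≤ Real.exp (2*s) := by
    rw [← Real.exp_zero]; exact Real.exp_le_exp.2 (by linarith)
  have hv : (0:ℝ) < Real.exp (2*a) := Real.exp_pos _
  have h1 : Real.exp (2*(s+a)) = Real.exp (2*s) * Real.exp (2*a) := by
    rw [← Real.exp_add]; ring_nf
  have h2 : Real.exp (2*(s-a)) = Real.exp (2*s) / Real.exp (2*a) := by
    rw [← Real.exp_sub]; ring_nf
  rw [tanh_exp_form (s+a), tanh_exp_form (s-a), tanh_exp_form s, h1, h2]
  exact pair_ineq _ _ hu hv

lemma my_tanh_lt_self {s : ℝ} (hs : 0 < s) : Real.tanh s < s := by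
  have key : Real.sinh s < s * Real.cosh s := by
    have hmono : StrictMonoOn (fun t => t * Real.cosh t - Real.sinh t) (Set.Ici 0) := by
      apply strictMonoOn_of_deriv_pos (convex_Ici 0)
      · exact ((continuous_id.mul Real.continuous_cosh).sub Real.continuous_sinh).continuousOn
      · intro x hx
        rw [interior_Ici, Set.mem_Ioi] at hx
        have hd : HasDerivAt (fun t => t * Real.cosh t - Real.sinh t)
            ((1 * Real.cosh x + x * Real.sinh x) - Real.cosh x) x :=
          ((hasDerivAt_id x).mul (Real.hasDerivAt_cosh x)).sub (Real.hasDerivAt_sinh x)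
        rw [hd.deriv]
        have : 0 < Real.sinh x := Real.sinh_pos_iff.2 hx
        nlinarith
    have := hmono (Set.self_mem_Ici) (Set.mem_Ici.2 hs.le) hs
    simpa using this
  rw [Real.tanh_eq_sinh_div_cosh, div_lt_iff₀ (Real.cosh_pos s)]
  exact key

lemma my_continuous_tanh : Continuous Real.tanh := by
  have : Real.tanh = fun x => Real.sinh x / Real.cosh x :=
    funext fun x => Real.tanh_eq_sinh_div_cosh x
  rw [this]
  exact Real.continuous_sinh.div Real.continuous_cosh fun x => (Real.cosh_pos x).ne'

lemma my_abs_tanh_le (x : ℝ) : |Real.tanh x| ≤ 1 := by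
  rw [tanh_exp_form, abs_div, abs_of_pos (by positivity : (0:ℝ) < Real.exp (2*x) + 1),
    div_le_one (by positivity)]
  have := Real.exp_pos (2*x)
  rw [abs_le]; constructor <;> linarith

lemma integrable_tanh_aff (c b : ℝ) :
    Integrable (fun z : ℝ => Real.tanh (c + b * z)) (gaussianReal 0 1) := by
  apply (integrable_const (1:ℝ)).mono'
  · exact (my_continuous_tanh.comp (by continuity)).aestronglyMeasurable
  · exact Filter.Eventually.of_forall fun z => by
      rw [Real.norm_eq_abs]; exact my_abs_tanh_le _

/-- `g s = ∫ tanh(s + √s · z) dγ(z)` where `γ` is the standard Gaussian measure. -/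
noncomputable def gaussTanh (s : ℝ) : ℝ :=
  ∫ z, Real.tanh (s + Real.sqrt s * z) ∂(gaussianReal 0 1)

theorem gaussTanh_le_tanh_and_lt_self :
    (∀ s : ℝ, 0 ≤ s → gaussTanh s ≤ Real.tanh s) ∧
    (∀ s : ℝ, 0 < s → gaussTanh s < s) := by
  have key : ∀ s : ℝ, 0 ≤ s → gaussTanh s ≤ Real.tanh s := by
    intro s hs
    have hmap : (gaussianReal 0 1).map (fun x : ℝ => -x) = gaussianReal 0 1 := by
      have h := gaussianReal_map_const_mul (μ := 0) (v := 1) (-1)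
      have h2 : (fun x : ℝ => (-1:ℝ) * x) = fun x : ℝ => -x := by funext x; ring
      rw [h2] at h
      simpa using h
    have hint : Integrable (fun z : ℝ => Real.tanh (s + Real.sqrt s * z)) (gaussianReal 0 1) :=
      integrable_tanh_aff s (Real.sqrt s)
    have heq : (fun z : ℝ => Real.tanh (s + Real.sqrt s * (-z)))
        = fun z : ℝ => Real.tanh (s + (-Real.sqrt s) * z) := by
      funext z; ring_nf
    have hint2 : Integrable (fun z : ℝ => Real.tanh (s + Real.sqrt s * (-z)))
        (gaussianReal 0 1) := by
      rw [heq]; exact integrable_tanh_aff s (-Real.sqrt s)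
    have hneg : ∫ z, Real.tanh (s + Real.sqrt s * (-z)) ∂(gaussianReal 0 1) = gaussTanh s := by
      rw [gaussTanh]
      nth_rewrite 2 [← hmap]
      rw [integral_map measurable_neg.aemeasurable]
      rw [hmap]
      exact hint.aestronglyMeasurable
    have hsum : gaussTanh s + gaussTanh s
        = ∫ z, (Real.tanh (s + Real.sqrt s * z) + Real.tanh (s + Real.sqrt s * (-z)))
            ∂(gaussianReal 0 1) := by
      rw [integral_add hint hint2, hneg, gaussTanh]
    have hb : ∀ z : ℝ, Real.tanh (s + Real.sqrt s * z) + Real.tanh (s + Real.sqrt s * (-z))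
        ≤ 2 * Real.tanh s := by
      intro z
      have := tanh_pair_le s (Real.sqrt s * z) hs
      have h3 : s - Real.sqrt s * z = s + Real.sqrt s * (-z) := by ring
      rwa [h3] at this
    have hle : ∫ z, (Real.tanh (s + Real.sqrt s * z) + Real.tanh (s + Real.sqrt s * (-z)))
        ∂(gaussianReal 0 1) ≤ ∫ _z, 2 * Real.tanh s ∂(gaussianReal 0 1) := by
      exact integral_mono (hint.add hint2) (integrable_const _)
        (fun z => hb z)
    rw [integral_const] at hle
    simp only [Measure.real, measure_univ, ENNReal.toReal_one, smul_eq_mul, one_mul] at hle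
    linarith [hsum ▸ hle]
  exact ⟨key, fun s hs => lt_of_le_of_lt (key s hs.le) (my_tanh_lt_self hs)⟩
end

section
/- For every real s with 0 < s ≤ 0.105, one has g(s) ≤ s − (2/3)·s². -/
open Real

lemma myHasDerivAt_tanh (x : ℝ) : HasDerivAt Real.tanh (1 - Real.tanh x ^ 2) x := by
  have hc := Real.cosh_pos x
  have h : HasDerivAt (fun y => Real.sinh y / Real.cosh y)
      ((Real.cosh x * Real.cosh x - Real.sinh x * Real.sinh x) / Real.cosh x ^ 2) x :=
    (Real.hasDerivAt_sinh x).div (Real.hasDerivAt_cosh x) hc.ne'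
  have : (Real.cosh x * Real.cosh x - Real.sinh x * Real.sinh x) / Real.cosh x ^ 2
      = 1 - Real.tanh x ^ 2 := by
    rw [Real.tanh_eq_sinh_div_cosh]
    have hs := Real.cosh_sq_sub_sinh_sq x
    field_simp
  rw [this] at h
  have he : Real.tanh = fun y => Real.sinh y / Real.cosh y :=
    funext fun y => Real.tanh_eq_sinh_div_cosh y
  rw [show (Real.tanh x) = Real.sinh x / Real.cosh x from Real.tanh_eq_sinh_div_cosh x] at h
  rw [he]
  exact h

lemma tanh_nonneg {x : ℝ} (hx : 0 ≤ x) : 0 ≤ Real.tanh x := by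
  rw [Real.tanh_eq_sinh_div_cosh]
  exact div_nonneg (Real.sinh_nonneg_iff.mpr hx) (Real.cosh_pos x).le

lemma neg_one_le_tanh (x : ℝ) : -1 ≤ Real.tanh x := by
  rw [Real.tanh_eq_sinh_div_cosh]
  rw [le_div_iff₀ (Real.cosh_pos x)]
  have h : 0 < Real.cosh x + Real.sinh x := by
    rw [Real.cosh_eq, Real.sinh_eq]; ring_nf; positivity
  linarith

lemma tanh_le_one (x : ℝ) : Real.tanh x ≤ 1 := by
  rw [Real.tanh_eq_sinh_div_cosh]
  rw [div_le_one (Real.cosh_pos x)]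
  have h : 0 < Real.cosh x - Real.sinh x := by
    rw [Real.cosh_eq, Real.sinh_eq]; ring_nf; positivity
  linarith

/-- generic helper: if f 0 = 0 and f' ≥ 0 on [0,x], then f x ≥ 0 -/
lemma nonneg_of_deriv {f f' : ℝ → ℝ} (hd : ∀ y, HasDerivAt f (f' y) y) (h0 : f 0 = 0)
    {x : ℝ} (hx : 0 ≤ x) (hf' : ∀ y, 0 ≤ y → y ≤ x → 0 ≤ f' y) : 0 ≤ f x := by
  have hmono : MonotoneOn f (Set.Icc 0 x) := by
    apply monotoneOn_of_deriv_nonneg (convex_Icc 0 x)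
    · exact Continuous.continuousOn (continuous_iff_continuousAt.mpr fun y => (hd y).continuousAt)
    · intro y hy
      exact ((hd y).differentiableAt).differentiableWithinAt
    · intro y hy
      rw [interior_Icc] at hy
      rw [(hd y).deriv]
      exact hf' y hy.1.le hy.2.le
  have := hmono (Set.left_mem_Icc.mpr hx) (Set.right_mem_Icc.mpr hx) hx
  linarith [h0 ▸ this]

lemma tanh_le_self {x : ℝ} (hx : 0 ≤ x) : Real.tanh x ≤ x := by
  have h := nonneg_of_deriv (f := fun y => y - Real.tanh y)
    (f' := fun y => 1 - (1 - Real.tanh y ^ 2))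
    (fun y => (hasDerivAt_id y).sub (myHasDerivAt_tanh y)) (by simp [Real.tanh_zero]) hx
    (fun y hy0 hyx => by beta_reduce; nlinarith [sq_nonneg (Real.tanh y)])
  simpa using h

lemma cubic_le_tanh {x : ℝ} (hx : 0 ≤ x) : x - x ^ 3 / 3 ≤ Real.tanh x := by
  have h := nonneg_of_deriv (f := fun y => Real.tanh y - (y - y ^ 3 / 3))
    (f' := fun y => (1 - Real.tanh y ^ 2) - (1 - y ^ 2))
    (fun y => (myHasDerivAt_tanh y).sub (((hasDerivAt_id y).sub
      (((hasDerivAt_pow 3 y)).div_const 3)).congr_deriv (by norm_num)))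
    (by simp [Real.tanh_zero]) hx
    (fun y hy0 hyx => by beta_reduce; nlinarith [tanh_le_self hy0, tanh_nonneg hy0])
  simpa using h

lemma tanh_le_quintic {x : ℝ} (hx : 0 ≤ x) :
    Real.tanh x ≤ x - x ^ 3 / 3 + (2 / 15) * x ^ 5 := by
  have h := nonneg_of_deriv
    (f := fun y => y - y ^ 3 / 3 + (2 / 15) * y ^ 5 - Real.tanh y)
    (f' := fun y => 1 - y ^ 2 + (2 / 3) * y ^ 4 - (1 - Real.tanh y ^ 2))
    (fun y => ((((hasDerivAt_id y).sub ((hasDerivAt_pow 3 y).div_const 3)).add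
      ((hasDerivAt_pow 5 y).const_mul (2 / 15))).sub (myHasDerivAt_tanh y)).congr_deriv
      (by norm_num; ring))
    (by simp [Real.tanh_zero]) hx
    (fun y hy0 hyx => by
      beta_reduce
      rcases le_or_gt (y ^ 2) (3 / 2) with hc | hc
      · have h0 : 0 ≤ y - y ^ 3 / 3 := by nlinarith
        nlinarith [cubic_le_tanh hy0, sq_nonneg (y ^ 3)]
      · nlinarith [sq_nonneg (Real.tanh y)])
  linarith [h]

lemma septic_le_tanh {x : ℝ} (hx : 0 ≤ x) :
    x - x ^ 3 / 3 + (2 / 15) * x ^ 5 - (17 / 315) * x ^ 7 ≤ Real.tanh x := by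
  rcases le_or_gt x 2 with hx2 | hx2
  · have h := nonneg_of_deriv
      (f := fun y => Real.tanh y - (y - y ^ 3 / 3 + (2 / 15) * y ^ 5 - (17 / 315) * y ^ 7))
      (f' := fun y => (1 - Real.tanh y ^ 2) - (1 - y ^ 2 + (2 / 3) * y ^ 4 - (17 / 45) * y ^ 6))
      (fun y => ((myHasDerivAt_tanh y).sub ((((hasDerivAt_id y).sub
        ((hasDerivAt_pow 3 y).div_const 3)).add
        ((hasDerivAt_pow 5 y).const_mul (2 / 15))).sub
        ((hasDerivAt_pow 7 y).const_mul (17 / 315)))).congr_deriv (by norm_num; ring))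
      (by simp [Real.tanh_zero]) hx
      (fun y hy0 hyx => by
        beta_reduce
        have hy2 : y ≤ 2 := hyx.trans hx2
        have hq := tanh_le_quintic hy0
        have hq0 : 0 ≤ y - y ^ 3 / 3 + (2 / 15) * y ^ 5 := by nlinarith [mul_nonneg hy0 (sq_nonneg (y ^ 2 - 5 / 4))]
        nlinarith [tanh_nonneg hy0, sq_nonneg (y ^ 4), sq_nonneg (y ^ 5),
          mul_nonneg (mul_nonneg (pow_nonneg hy0 8) (pow_nonneg hy0 0)) (sub_nonneg.mpr hy2)])
    linarith [h]
  · have h1 : Real.tanh x ≥ -1 := neg_one_le_tanh x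
    nlinarith [pow_pos (lt_trans two_pos hx2) 7, pow_pos (lt_trans two_pos hx2) 5,
      pow_pos (lt_trans two_pos hx2) 3, sq_nonneg (x - 2), sq_nonneg (x ^ 2 - 4),
      mul_pos (mul_pos (sub_pos.mpr hx2) (sub_pos.mpr hx2)) (pow_pos (lt_trans two_pos hx2) 5)]

lemma tanh_le_P_nonneg {x : ℝ} (hx : 0 ≤ x) :
    Real.tanh x ≤ x - x ^ 3 / 3 + (2 / 15) * x ^ 5 - (17 / 315) * x ^ 7 + (3 / 100) * x ^ 8 := by
  rcases le_or_gt x (3 / 2) with hx2 | hx2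
  · have h := nonneg_of_deriv
      (f := fun y => y - y ^ 3 / 3 + (2 / 15) * y ^ 5 - (17 / 315) * y ^ 7 + (3 / 100) * y ^ 8
        - Real.tanh y)
      (f' := fun y => 1 - y ^ 2 + (2 / 3) * y ^ 4 - (17 / 45) * y ^ 6 + (6 / 25) * y ^ 7
        - (1 - Real.tanh y ^ 2))
      (fun y => ((((((hasDerivAt_id y).sub ((hasDerivAt_pow 3 y).div_const 3)).add
        ((hasDerivAt_pow 5 y).const_mul (2 / 15))).sub
        ((hasDerivAt_pow 7 y).const_mul (17 / 315))).add
        ((hasDerivAt_pow 8 y).const_mul (3 / 100))).sub (myHasDerivAt_tanh y)).congr_deriv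
        (by norm_num; ring))
      (by simp [Real.tanh_zero]) hx
      (fun y hy0 hyx => by
        beta_reduce
        have hy2 : y ≤ 3 / 2 := hyx.trans hx2
        have hp7 := septic_le_tanh hy0
        have hp70 : 0 ≤ y - y ^ 3 / 3 + (2 / 15) * y ^ 5 - (17 / 315) * y ^ 7 := by
          have h6 : y ^ 6 ≤ (3 / 2 : ℝ) ^ 6 := pow_le_pow_left₀ hy0 hy2 6
          nlinarith [mul_nonneg hy0 (sq_nonneg (y ^ 2 - 5 / 4)),
            mul_le_mul_of_nonneg_right h6 hy0]
        nlinarith [tanh_nonneg hy0, mul_nonneg (pow_nonneg hy0 7) (sub_nonneg.mpr hy2),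
          mul_nonneg (pow_nonneg hy0 8) (sub_nonneg.mpr hy2),
          mul_nonneg (pow_nonneg hy0 9) (sub_nonneg.mpr hy2),
          mul_nonneg (pow_nonneg hy0 10) (sub_nonneg.mpr hy2),
          mul_nonneg (pow_nonneg hy0 11) (sub_nonneg.mpr hy2),
          mul_nonneg (pow_nonneg hy0 12) (sub_nonneg.mpr hy2),
          mul_nonneg (pow_nonneg hy0 13) (sub_nonneg.mpr hy2),
          sq_nonneg (y ^ 7), pow_nonneg hy0 7])
    linarith [h]
  · have h1 := tanh_le_one x
    have hx0 : (0:ℝ) < x := lt_trans (by norm_num) hx2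
    nlinarith [pow_pos hx0 5, pow_pos hx0 7, pow_pos hx0 8, pow_pos hx0 3,
      mul_nonneg (pow_nonneg hx0.le 7) (sub_nonneg.mpr hx2.le),
      mul_nonneg (pow_nonneg hx0.le 6) (sub_nonneg.mpr hx2.le),
      mul_nonneg (mul_nonneg (pow_nonneg hx0.le 6) (sub_nonneg.mpr hx2.le)) (sub_nonneg.mpr hx2.le)]

lemma tanh_le_P (x : ℝ) :
    Real.tanh x ≤ x - x ^ 3 / 3 + (2 / 15) * x ^ 5 - (17 / 315) * x ^ 7 + (3 / 100) * x ^ 8 := by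
  rcases le_or_gt 0 x with hx | hx
  · exact tanh_le_P_nonneg hx
  · have h := septic_le_tanh (x := -x) (by linarith)
    rw [Real.tanh_neg] at h
    nlinarith [pow_nonneg (sq_nonneg x) 4]

open Real MeasureTheory Filter Topology

noncomputable def Ega (x : ℝ) : ℝ := Real.exp (-(1/2 : ℝ) * x ^ 2)

lemma integ_pow_Ega (k : ℕ) : Integrable fun x : ℝ => x ^ k * Ega x := by
  have hk : (-1 : ℝ) < (k : ℝ) := neg_one_lt_zero.trans_le (Nat.cast_nonneg k)
  have h := integrable_rpow_mul_exp_neg_mul_sq (b := (1/2 : ℝ)) (by norm_num) hk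
  simpa [Ega, Real.rpow_natCast] using h

lemma Ega_hasDeriv (x : ℝ) : HasDerivAt Ega (-x * Ega x) x := by
  have h : HasDerivAt (fun y : ℝ => -(1/2 : ℝ) * y ^ 2) (-(1/2 : ℝ) * (2 * x)) x := by
    simpa using (hasDerivAt_pow 2 x).const_mul (-(1/2 : ℝ))
  have := h.exp
  have h2 : HasDerivAt (fun y => Real.exp (-(1/2 : ℝ) * y ^ 2)) (-x * Ega x) x :=
    this.congr_deriv (by simp only [Ega]; ring)
  exact h2

lemma tendsto_Ega_atTop : Tendsto Ega atTop (𝓝 0) := by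
  have h : Tendsto (fun x : ℝ => -(1/2 : ℝ) * x ^ 2) atTop atBot :=
    (tendsto_pow_atTop two_ne_zero).const_mul_atTop_of_neg (by norm_num)
  exact Real.tendsto_exp_atBot.comp h

lemma tendsto_Ega_atBot : Tendsto Ega atBot (𝓝 0) := by
  have h : Tendsto (Ega ∘ Neg.neg) atBot (𝓝 0) := by
    apply (tendsto_Ega_atTop).comp tendsto_neg_atBot_atTop
  apply h.congr
  intro x
  simp [Ega, Function.comp, neg_sq]

lemma M1_eq_zero : ∫ x : ℝ, x ^ 1 * Ega x = 0 := by
  have h := integral_of_hasDerivAt_of_tendsto (f := fun x => -Ega x)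
    (f' := fun x => x ^ 1 * Ega x)
    (fun x => ((Ega_hasDeriv x).neg).congr_deriv (by ring))
    (integ_pow_Ega 1) (tendsto_Ega_atBot.neg) (tendsto_Ega_atTop.neg)
  simpa using h

lemma M0_eq : ∫ x : ℝ, Ega x = Real.sqrt (2 * π) := by
  have h := integral_gaussian (1/2)
  simp only [Ega]
  rw [h]
  norm_num [mul_comm]

lemma Mrec (k : ℕ) :
    ∫ x : ℝ, x ^ (k + 2) * Ega x = (k + 1 : ℝ) * ∫ x : ℝ, x ^ k * Ega x := by
  have h := MeasureTheory.integral_mul_deriv_eq_deriv_mul_of_integrable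
    (u := fun x : ℝ => x ^ (k + 1)) (u' := fun x : ℝ => (k + 1 : ℝ) * x ^ k)
    (v := Ega) (v' := fun x => -x * Ega x)
    (fun x _ => by simpa using (hasDerivAt_pow (k + 1) x))
    (fun x _ => Ega_hasDeriv x)
    (by
      have := (integ_pow_Ega (k + 2)).neg
      apply this.congr
      filter_upwards with x
      simp [Pi.mul_apply]
      ring)
    (by
      have := (integ_pow_Ega k).const_mul (k + 1 : ℝ)
      apply this.congr
      filter_upwards with x
      simp [Pi.mul_apply]
      ring)
    (by
      have := integ_pow_Ega (k + 1)
      apply this.congr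
      filter_upwards with x
      simp [Pi.mul_apply])
  have h2 : ∫ x : ℝ, (fun x : ℝ => x ^ (k + 1)) x * (fun x => -x * Ega x) x
      = - ∫ x : ℝ, x ^ (k + 2) * Ega x := by
    rw [← integral_neg]
    congr 1
    funext x
    ring
  have h3 : ∫ x : ℝ, (fun x : ℝ => (k + 1 : ℝ) * x ^ k) x * Ega x
      = (k + 1 : ℝ) * ∫ x : ℝ, x ^ k * Ega x := by
    rw [← MeasureTheory.integral_const_mul]
    congr 1
    funext x
    ring
  rw [h2, h3] at h
  linarith

lemma M0_eq' : ∫ x : ℝ, x ^ 0 * Ega x = Real.sqrt (2 * π) := by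
  simp only [pow_zero, one_mul]; exact M0_eq

lemma M2_eq : ∫ x : ℝ, x ^ 2 * Ega x = Real.sqrt (2 * π) := by
  have h := Mrec 0; rw [M0_eq'] at h; simpa using h

lemma M3_eq : ∫ x : ℝ, x ^ 3 * Ega x = 0 := by
  have h := Mrec 1; rw [M1_eq_zero] at h; simpa using h

lemma M4_eq : ∫ x : ℝ, x ^ 4 * Ega x = 3 * Real.sqrt (2 * π) := by
  have h := Mrec 2; rw [M2_eq] at h; rw [h]; push_cast; ring

lemma M5_eq : ∫ x : ℝ, x ^ 5 * Ega x = 0 := by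
  have h := Mrec 3; rw [M3_eq] at h; simpa using h

lemma M6_eq : ∫ x : ℝ, x ^ 6 * Ega x = 15 * Real.sqrt (2 * π) := by
  have h := Mrec 4; rw [M4_eq] at h; rw [h]; push_cast; ring

lemma M7_eq : ∫ x : ℝ, x ^ 7 * Ega x = 0 := by
  have h := Mrec 5; rw [M5_eq] at h; simpa using h

lemma M8_eq : ∫ x : ℝ, x ^ 8 * Ega x = 105 * Real.sqrt (2 * π) := by
  have h := Mrec 6; rw [M6_eq] at h; rw [h]; push_cast; ring

lemma integral_poly_Ega (b0 b1 b2 b3 b4 b5 b6 b7 b8 : ℝ) :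
    ∫ z : ℝ, (b0 * (z ^ 0 * Ega z) + b1 * (z ^ 1 * Ega z) + b2 * (z ^ 2 * Ega z)
      + b3 * (z ^ 3 * Ega z) + b4 * (z ^ 4 * Ega z) + b5 * (z ^ 5 * Ega z)
      + b6 * (z ^ 6 * Ega z) + b7 * (z ^ 7 * Ega z) + b8 * (z ^ 8 * Ega z))
    = (b0 + b2 + 3 * b4 + 15 * b6 + 105 * b8) * Real.sqrt (2 * π) := by
  have I : ∀ (c : ℝ) (j : ℕ), Integrable fun z : ℝ => c * (z ^ j * Ega z) :=
    fun c j => (integ_pow_Ega j).const_mul c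
  have S2 : Integrable (fun z : ℝ => b0 * (z ^ 0 * Ega z) + b1 * (z ^ 1 * Ega z)) volume := (I b0 0).add (I b1 1)
  have S3 : Integrable (fun z : ℝ => b0 * (z ^ 0 * Ega z) + b1 * (z ^ 1 * Ega z) + b2 * (z ^ 2 * Ega z)) volume := S2.add (I b2 2)
  have S4 : Integrable (fun z : ℝ => b0 * (z ^ 0 * Ega z) + b1 * (z ^ 1 * Ega z) + b2 * (z ^ 2 * Ega z) + b3 * (z ^ 3 * Ega z)) volume := S3.add (I b3 3)
  have S5 : Integrable (fun z : ℝ => b0 * (z ^ 0 * Ega z) + b1 * (z ^ 1 * Ega z) + b2 * (z ^ 2 * Ega z) + b3 * (z ^ 3 * Ega z) + b4 * (z ^ 4 * Ega z)) volume := S4.add (I b4 4)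
  have S6 : Integrable (fun z : ℝ => b0 * (z ^ 0 * Ega z) + b1 * (z ^ 1 * Ega z) + b2 * (z ^ 2 * Ega z) + b3 * (z ^ 3 * Ega z) + b4 * (z ^ 4 * Ega z) + b5 * (z ^ 5 * Ega z)) volume := S5.add (I b5 5)
  have S7 : Integrable (fun z : ℝ => b0 * (z ^ 0 * Ega z) + b1 * (z ^ 1 * Ega z) + b2 * (z ^ 2 * Ega z) + b3 * (z ^ 3 * Ega z) + b4 * (z ^ 4 * Ega z) + b5 * (z ^ 5 * Ega z) + b6 * (z ^ 6 * Ega z)) volume := S6.add (I b6 6)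
  have S8 : Integrable (fun z : ℝ => b0 * (z ^ 0 * Ega z) + b1 * (z ^ 1 * Ega z) + b2 * (z ^ 2 * Ega z) + b3 * (z ^ 3 * Ega z) + b4 * (z ^ 4 * Ega z) + b5 * (z ^ 5 * Ega z) + b6 * (z ^ 6 * Ega z) + b7 * (z ^ 7 * Ega z)) volume := S7.add (I b7 7)
  rw [integral_add S8 (I b8 8), integral_add S7 (I b7 7), integral_add S6 (I b6 6),
    integral_add S5 (I b5 5), integral_add S4 (I b4 4), integral_add S3 (I b3 3),
    integral_add S2 (I b2 2), integral_add (I b0 0) (I b1 1)]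
  rw [integral_const_mul, integral_const_mul, integral_const_mul, integral_const_mul,
    integral_const_mul, integral_const_mul, integral_const_mul, integral_const_mul,
    integral_const_mul]
  rw [M0_eq', M1_eq_zero, M2_eq, M3_eq, M4_eq, M5_eq, M6_eq, M7_eq, M8_eq]
  ring

open ProbabilityTheory in
lemma pdf_eq (z : ℝ) : gaussianPDFReal 0 1 z = (Real.sqrt (2 * π))⁻¹ * Ega z := by
  rw [gaussianPDFReal, Ega]
  push_cast
  norm_num
  left
  congr 1
  ring

open ProbabilityTheory in
lemma gauss_int (g : ℝ → ℝ) :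
    ∫ z, g z ∂(gaussianReal 0 1) = ∫ z, (Real.sqrt (2 * π))⁻¹ * (Ega z * g z) := by
  rw [gaussianReal_of_var_ne_zero 0 one_ne_zero]
  have hmeas : Measurable fun x => (gaussianPDFReal 0 1 x).toNNReal :=
    (measurable_gaussianPDFReal 0 1).real_toNNReal
  have hd : (gaussianPDF 0 1) = fun x => ((gaussianPDFReal 0 1 x).toNNReal : ENNReal) := by
    funext x
    rfl
  rw [hd, integral_withDensity_eq_integral_smul hmeas]
  congr 1
  funext z
  rw [NNReal.smul_def, Real.coe_toNNReal _ (gaussianPDFReal_nonneg 0 1 z), pdf_eq,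
    smul_eq_mul]
  ring

open MeasureTheory ProbabilityTheory

theorem gaussTanh_le_of_small (s : ℝ) (hs0 : 0 < s) (hs : s ≤ 0.105) :
    gaussTanh s ≤ s - (2 / 3) * s ^ 2 := by
  have hsqrt_pos : (0:ℝ) < Real.sqrt (2 * Real.pi) := Real.sqrt_pos.mpr (by positivity)
  have hC : (0:ℝ) ≤ (Real.sqrt (2 * Real.pi))⁻¹ := by positivity
  set t := Real.sqrt s with ht
  have ht2 : t ^ 2 = s := Real.sq_sqrt hs0.le
  have ht0 : 0 ≤ t := Real.sqrt_nonneg s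
  rw [gaussTanh, gauss_int, MeasureTheory.integral_const_mul]
  -- the polynomial upper bound function
  set P : ℝ → ℝ := fun z => Ega z * ((s + t * z) - (s + t * z) ^ 3 / 3
    + (2 / 15) * (s + t * z) ^ 5 - (17 / 315) * (s + t * z) ^ 7
    + (3 / 100) * (s + t * z) ^ 8) with hP
  have hPsum : P = fun z : ℝ =>
      (s - s ^ 3 / 3 + (2/15) * s ^ 5 - (17/315) * s ^ 7 + (3/100) * s ^ 8) * (z ^ 0 * Ega z)
      + (t * (1 - s ^ 2 + (2/3) * s ^ 4 - (17/45) * s ^ 6 + (6/25) * s ^ 7)) * (z ^ 1 * Ega z)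
      + (t ^ 2 * (-s + (4/3) * s ^ 3 - (17/15) * s ^ 5 + (21/25) * s ^ 6)) * (z ^ 2 * Ega z)
      + (t ^ 3 * (-(1/3) + (4/3) * s ^ 2 - (17/9) * s ^ 4 + (42/25) * s ^ 5)) * (z ^ 3 * Ega z)
      + (t ^ 4 * ((2/3) * s - (17/9) * s ^ 3 + (21/10) * s ^ 4)) * (z ^ 4 * Ega z)
      + (t ^ 5 * (2/15 - (17/15) * s ^ 2 + (42/25) * s ^ 3)) * (z ^ 5 * Ega z)
      + (t ^ 6 * (-(17/45) * s + (21/25) * s ^ 2)) * (z ^ 6 * Ega z)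
      + (t ^ 7 * (-(17/315) + (6/25) * s)) * (z ^ 7 * Ega z)
      + (t ^ 8 * (3/100)) * (z ^ 8 * Ega z) := by
    funext z
    rw [hP]
    ring
  have hEga_pos : ∀ z : ℝ, 0 < Ega z := fun z => Real.exp_pos _
  have hIntP : Integrable P := by
    rw [hPsum]
    exact ((((((((((integ_pow_Ega 0).const_mul _).add
      ((integ_pow_Ega 1).const_mul _)).add ((integ_pow_Ega 2).const_mul _)).add
      ((integ_pow_Ega 3).const_mul _)).add ((integ_pow_Ega 4).const_mul _)).add
      ((integ_pow_Ega 5).const_mul _)).add ((integ_pow_Ega 6).const_mul _)).add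
      ((integ_pow_Ega 7).const_mul _)).add ((integ_pow_Ega 8).const_mul _))
  have hcont_tanh : Continuous Real.tanh := by
    have : Real.tanh = fun x => Real.sinh x / Real.cosh x :=
      funext fun x => Real.tanh_eq_sinh_div_cosh x
    rw [this]
    exact Real.continuous_sinh.div Real.continuous_cosh fun x => (Real.cosh_pos x).ne'
  have hIntT : Integrable (fun z : ℝ => Ega z * Real.tanh (s + t * z)) := by
    apply Integrable.mono' (by simpa using integ_pow_Ega 0)
    · have c1 : Continuous Ega :=
        Real.continuous_exp.comp (continuous_const.mul (continuous_pow 2))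
      have c2 : Continuous fun z : ℝ => s + t * z :=
        continuous_const.add (continuous_const.mul continuous_id)
      exact (c1.mul (hcont_tanh.comp c2)).aestronglyMeasurable
    · filter_upwards with z
      rw [Real.norm_eq_abs, abs_mul, abs_of_pos (hEga_pos z)]
      have h1 : |Real.tanh (s + t * z)| ≤ 1 :=
        abs_le.mpr ⟨neg_one_le_tanh _, tanh_le_one _⟩
      nlinarith [hEga_pos z, abs_nonneg (Real.tanh (s + t * z))]
  have hmono : ∫ z : ℝ, Ega z * Real.tanh (s + t * z) ≤ ∫ z : ℝ, P z := by
    apply integral_mono hIntT hIntP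
    intro z
    rw [hP]
    exact mul_le_mul_of_nonneg_left (tanh_le_P (s + t * z)) (hEga_pos z).le
  have hval : ∫ z : ℝ, P z =
      ((s - s ^ 3 / 3 + (2/15) * s ^ 5 - (17/315) * s ^ 7 + (3/100) * s ^ 8)
      + (t ^ 2 * (-s + (4/3) * s ^ 3 - (17/15) * s ^ 5 + (21/25) * s ^ 6))
      + 3 * (t ^ 4 * ((2/3) * s - (17/9) * s ^ 3 + (21/10) * s ^ 4))
      + 15 * (t ^ 6 * (-(17/45) * s + (21/25) * s ^ 2))
      + 105 * (t ^ 8 * (3/100))) * Real.sqrt (2 * Real.pi) := by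
    rw [hPsum]
    exact integral_poly_Ega _ _ _ _ _ _ _ _ _
  have hfinal : (Real.sqrt (2 * Real.pi))⁻¹ * ∫ z : ℝ, P z ≤ s - (2 / 3) * s ^ 2 := by
    have hid : ∀ X : ℝ, (Real.sqrt (2 * Real.pi))⁻¹ * (X * Real.sqrt (2 * Real.pi)) = X :=
      fun X => by field_simp
    rw [hval, hid]
    rw [← ht2] at hs ⊢
    nlinarith [mul_nonneg (pow_nonneg ht0 4) (sub_nonneg.mpr hs),
      mul_nonneg (pow_nonneg ht0 6) (sub_nonneg.mpr hs),
      mul_nonneg (pow_nonneg ht0 8) (sub_nonneg.mpr hs),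
      mul_nonneg (pow_nonneg ht0 10) (sub_nonneg.mpr hs),
      mul_nonneg (pow_nonneg ht0 12) (sub_nonneg.mpr hs),
      mul_nonneg (pow_nonneg ht0 14) (sub_nonneg.mpr hs),
      pow_nonneg ht0 16, pow_nonneg ht0 2, sq_nonneg t]
  calc (Real.sqrt (2 * Real.pi))⁻¹ * ∫ z : ℝ, Ega z * Real.tanh (s + t * z)
      ≤ (Real.sqrt (2 * Real.pi))⁻¹ * ∫ z : ℝ, P z := by
        exact mul_le_mul_of_nonneg_left hmono hC
    _ ≤ s - (2 / 3) * s ^ 2 := hfinal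
end

section
/- For all real numbers x, y with 0 ≤ x ≤ y ≤ 1/2 and y > 0, one has d_KL(x‖y) ≥ (x−y)² / (2y(1−y)). -/
open Real Set

/-- derivative of the auxiliary function `h`. -/
lemma aux_hasDerivAt_h (t : ℝ) (ht : t ≠ 0) :
    HasDerivAt (fun t : ℝ => Real.log t - (t - 1) + (t - 1) ^ 2 / 2)
      ((t - 1) ^ 2 / t) t := by
  have h1 : HasDerivAt (fun t : ℝ => Real.log t) t⁻¹ t := Real.hasDerivAt_log ht
  have h2 : HasDerivAt (fun t : ℝ => t - 1) 1 t := (hasDerivAt_id t).sub_const 1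
  have h3 : HasDerivAt (fun t : ℝ => (t - 1) ^ 2 / 2) ((2 * (t - 1) ^ 1 * 1) / 2) t :=
    (h2.pow 2).div_const 2
  have := (h1.sub h2).add h3
  refine this.congr_deriv ?_
  field_simp
  ring

/-- the auxiliary function `h` is monotone on `(0, ∞)`. -/
lemma aux_h_mono : MonotoneOn (fun t : ℝ => Real.log t - (t - 1) + (t - 1) ^ 2 / 2)
    (Set.Ioi 0) := by
  apply monotoneOn_of_deriv_nonneg (convex_Ioi 0)
  · apply ContinuousOn.add
    · exact (Real.continuousOn_log.mono (by intro x hx; exact ne_of_gt hx)).sub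
        (continuous_id.sub continuous_const).continuousOn
    · exact (((continuous_id.sub continuous_const).pow 2).div_const 2).continuousOn
  · intro t ht
    rw [interior_Ioi] at ht
    exact (aux_hasDerivAt_h t (ne_of_gt ht)).differentiableAt.differentiableWithinAt
  · intro t ht
    rw [interior_Ioi] at ht
    have ht' : 0 < t := ht
    rw [(aux_hasDerivAt_h t (ne_of_gt ht')).deriv]
    positivity

lemma aux_h_nonpos {t : ℝ} (h0 : 0 < t) (h1 : t ≤ 1) :
    Real.log t - (t - 1) + (t - 1) ^ 2 / 2 ≤ 0 := by
  have := aux_h_mono h0 (Set.mem_Ioi.2 one_pos) h1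
  simpa using this

lemma aux_h_nonneg {t : ℝ} (h1 : 1 ≤ t) :
    0 ≤ Real.log t - (t - 1) + (t - 1) ^ 2 / 2 := by
  have := aux_h_mono (Set.mem_Ioi.2 one_pos) (Set.mem_Ioi.2 (lt_of_lt_of_le one_pos h1)) h1
  simpa using this

/-- derivative of the main auxiliary function `H`. -/
lemma aux_hasDerivAt_H (t : ℝ) (ht : t ≠ 0) :
    HasDerivAt (fun t : ℝ => t * Real.log t - ((t - 1) + (t - 1) ^ 2 / 2 - (t - 1) ^ 3 / 6))
      (Real.log t - (t - 1) + (t - 1) ^ 2 / 2) t := by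
  have h1 : HasDerivAt (fun t : ℝ => t * Real.log t) (Real.log t + 1) t :=
    Real.hasDerivAt_mul_log ht
  have h2 : HasDerivAt (fun t : ℝ => t - 1) 1 t := (hasDerivAt_id t).sub_const 1
  have h3 : HasDerivAt (fun t : ℝ => (t - 1) ^ 2 / 2) ((2 * (t - 1) ^ 1 * 1) / 2) t :=
    (h2.pow 2).div_const 2
  have h4 : HasDerivAt (fun t : ℝ => (t - 1) ^ 3 / 6) ((3 * (t - 1) ^ 2 * 1) / 6) t :=
    (h2.pow 3).div_const 6
  have := h1.sub ((h2.add h3).sub h4)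
  refine this.congr_deriv ?_
  ring

lemma aux_H_contOn : Continuous
    (fun t : ℝ => t * Real.log t - ((t - 1) + (t - 1) ^ 2 / 2 - (t - 1) ^ 3 / 6)) := by
  apply Real.continuous_mul_log.sub
  continuity

/-- Key pointwise inequality: `t log t ≥ (t-1) + (t-1)²/2 - (t-1)³/6` for `t ≥ 0`. -/
lemma aux_key {t : ℝ} (ht : 0 ≤ t) :
    (t - 1) + (t - 1) ^ 2 / 2 - (t - 1) ^ 3 / 6 ≤ t * Real.log t := by
  set H := fun t : ℝ => t * Real.log t - ((t - 1) + (t - 1) ^ 2 / 2 - (t - 1) ^ 3 / 6) with hH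
  have hH1 : H 1 = 0 := by simp [hH]
  have key : 0 ≤ H t := by
    rcases le_or_gt t 1 with h1 | h1
    · -- antitone on [0,1]
      have hanti : AntitoneOn H (Set.Icc 0 1) := by
        apply antitoneOn_of_deriv_nonpos (convex_Icc 0 1) aux_H_contOn.continuousOn
        · intro s hs
          rw [interior_Icc] at hs
          exact (aux_hasDerivAt_H s (ne_of_gt hs.1)).differentiableAt.differentiableWithinAt
        · intro s hs
          rw [interior_Icc] at hs
          rw [(aux_hasDerivAt_H s (ne_of_gt hs.1)).deriv]
          exact aux_h_nonpos hs.1 hs.2.le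
      have := hanti (Set.mem_Icc.2 ⟨ht, h1⟩) (Set.mem_Icc.2 ⟨zero_le_one, le_refl 1⟩) h1
      rw [hH1] at this
      exact this
    · -- monotone on [1,∞)
      have hmono : MonotoneOn H (Set.Ici 1) := by
        apply monotoneOn_of_deriv_nonneg (convex_Ici 1) aux_H_contOn.continuousOn
        · intro s hs
          rw [interior_Ici] at hs
          exact (aux_hasDerivAt_H s (zero_lt_one.trans hs).ne').differentiableAt.differentiableWithinAt
        · intro s hs
          rw [interior_Ici] at hs
          rw [(aux_hasDerivAt_H s (zero_lt_one.trans hs).ne').deriv]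
          exact aux_h_nonneg hs.le
      have := hmono (Set.mem_Ici.2 le_rfl) (Set.mem_Ici.2 h1.le) h1.le
      rw [hH1] at this
      exact this
  simp only [hH] at key
  linarith

/-- Scaled key inequality. -/
lemma aux_key' {a b : ℝ} (ha : 0 ≤ a) (hb : 0 < b) :
    (a - b) + (a - b) ^ 2 / (2 * b) - (a - b) ^ 3 / (6 * b ^ 2) ≤ a * Real.log (a / b) := by
  have h := aux_key (t := a / b) (by positivity)
  have hb' : b ≠ 0 := hb.ne'
  have h2 : b * ((a / b - 1) + (a / b - 1) ^ 2 / 2 - (a / b - 1) ^ 3 / 6)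
      ≤ b * ((a / b) * Real.log (a / b)) := by
    exact mul_le_mul_of_nonneg_left h hb.le
  have e1 : b * ((a / b) * Real.log (a / b)) = a * Real.log (a / b) := by
    field_simp
  have e2 : b * ((a / b - 1) + (a / b - 1) ^ 2 / 2 - (a / b - 1) ^ 3 / 6)
      = (a - b) + (a - b) ^ 2 / (2 * b) - (a - b) ^ 3 / (6 * b ^ 2) := by
    field_simp
  rw [e1, e2] at h2
  exact h2

/-- Binary KL divergence `d_KL(x‖y)` (with the convention `0·log 0 = 0`,
which holds automatically since `Real.log 0 = 0`). -/
noncomputable def klBin (x y : ℝ) : ℝ :=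
  x * Real.log (x / y) + (1 - x) * Real.log ((1 - x) / (1 - y))

theorem klBin_ge (x y : ℝ) (hx0 : 0 ≤ x) (hxy : x ≤ y) (hy : y ≤ 1 / 2) (hy0 : 0 < y) :
    klBin x y ≥ (x - y) ^ 2 / (2 * y * (1 - y)) := by
  have hy1 : 0 < 1 - y := by linarith
  have h1 := aux_key' hx0 hy0
  have h2 := aux_key' (a := 1 - x) (b := 1 - y) (by linarith) hy1
  have hd : 0 ≤ y - x := by linarith
  -- the cubic correction term is nonneg
  have hc : (y - x) ^ 3 / (6 * (1 - y) ^ 2) ≤ (y - x) ^ 3 / (6 * y ^ 2) := by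
    apply div_le_div_of_nonneg_left (by positivity) (by positivity)
    nlinarith
  have e3 : (x - y) ^ 2 / (2 * y) + (x - y) ^ 2 / (2 * (1 - y))
      = (x - y) ^ 2 / (2 * y * (1 - y)) := by
    field_simp
    ring
  have e4 : ((1 - x) - (1 - y)) = y - x := by ring
  unfold klBin
  have hx3 : (x - y) ^ 3 = -((y - x) ^ 3) := by ring
  have h2' : (y - x) + (y - x) ^ 2 / (2 * (1 - y)) - (y - x) ^ 3 / (6 * (1 - y) ^ 2)
      ≤ (1 - x) * Real.log ((1 - x) / (1 - y)) := by
    calc (y - x) + (y - x) ^ 2 / (2 * (1 - y)) - (y - x) ^ 3 / (6 * (1 - y) ^ 2)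
        = ((1-x) - (1-y)) + ((1-x) - (1-y)) ^ 2 / (2 * (1-y)) - ((1-x)-(1-y)) ^ 3 / (6 * (1-y) ^ 2) := by ring
      _ ≤ _ := h2
  have h1' : (x - y) + (x - y) ^ 2 / (2 * y) + (y - x) ^ 3 / (6 * y ^ 2)
      ≤ x * Real.log (x / y) := by
    calc (x - y) + (x - y) ^ 2 / (2 * y) + (y - x) ^ 3 / (6 * y ^ 2)
        = (x - y) + (x - y) ^ 2 / (2 * y) - (x - y) ^ 3 / (6 * y ^ 2) := by ring
      _ ≤ _ := h1
  have heq : (x - y) ^ 2 / (2 * y) = (y - x) ^ 2 / (2 * y) := by ring_nf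
  have heq2 : (y - x) ^ 2 / (2 * (1 - y)) = (x - y) ^ 2 / (2 * (1 - y)) := by ring
  linarith [h1', h2', hc, e3]
end

section
/- For all real numbers x, y with 0 < x ≤ y ≤ 1/2, setting t = y − x, the series Σ_{k=2}^{∞} (t^k / (k(k−1)))·(y^{1−k} + (−1)^k·(1−y)^{1−k}) converges and its sum equals d_KL(x‖y). Moreover, every summand is non-negative. -/
set_option maxHeartbeats 1000000


lemma aux_hasSum {u : ℝ} (hu : |u| < 1) :
    HasSum (fun k : ℕ => u ^ (k + 2) / ((k + 2) * (k + 1)))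
      ((1 - u) * Real.log (1 - u) + u) := by
  have h1 : HasSum (fun n : ℕ => u ^ (n + 1) / (n + 1)) (-Real.log (1 - u)) :=
    Real.hasSum_pow_div_log_of_abs_lt_one hu
  have h2 : HasSum (fun n : ℕ => u * (u ^ (n + 1) / (n + 1))) (u * -Real.log (1 - u)) :=
    h1.mul_left u
  have h3 : HasSum (fun n : ℕ => u ^ (n + 2) / (n + 2)) (-Real.log (1 - u) - u) := by
    have h := (hasSum_nat_add_iff' (f := fun n : ℕ => u ^ (n + 1) / (n + 1)) 1).2 h1
    simp only [Finset.range_one, Finset.sum_singleton, Nat.cast_zero] at h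
    convert h using 2 with n
    · exact rfl
    · push_cast
      ring_nf
    · norm_num
  have h4 := h2.sub h3
  convert h4 using 1
  · exact rfl
  · funext n
    have hn1 : ((n : ℝ) + 1) ≠ 0 := by positivity
    have hn2 : ((n : ℝ) + 2) ≠ 0 := by positivity
    field_simp
    ring
  · ring

theorem klBin_series (x y : ℝ) (hx0 : 0 < x) (hxy : x ≤ y) (hy : y ≤ 1 / 2) :
    HasSum (fun k : ℕ => (y - x) ^ (k + 2) / ((k + 2) * (k + 1)) *
        (y ^ (1 - ((k : ℤ) + 2)) + (-1) ^ (k + 2) * (1 - y) ^ (1 - ((k : ℤ) + 2))))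
      (klBin x y) ∧
    ∀ k : ℕ, 0 ≤ (y - x) ^ (k + 2) / ((k + 2) * (k + 1)) *
        (y ^ (1 - ((k : ℤ) + 2)) + (-1) ^ (k + 2) * (1 - y) ^ (1 - ((k : ℤ) + 2))) := by
  have hy0 : 0 < y := lt_of_lt_of_le hx0 hxy
  have hy1 : 0 < 1 - y := by linarith
  have ht0 : 0 ≤ y - x := by linarith
  have hty : y - x < y := by linarith
  have hty1 : y - x < 1 - y := by linarith
  set t := y - x with htdef
  have hu : |t / y| < 1 := by
    rw [abs_of_nonneg (by positivity)]
    rw [div_lt_one hy0]; exact hty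
  have hv : |(-(t / (1 - y)))| < 1 := by
    rw [abs_neg, abs_of_nonneg (by positivity), div_lt_one hy1]; exact hty1
  have h5 := (aux_hasSum hu).mul_left y
  have h6 := (aux_hasSum hv).mul_left (1 - y)
  have h7 := h5.add h6
  have hzpow : ∀ k : ℕ, ∀ z : ℝ, z ^ (1 - ((k : ℤ) + 2)) = (z ^ (k + 1 : ℕ))⁻¹ := by
    intro k z
    rw [show (1 - ((k : ℤ) + 2)) = -((k + 1 : ℕ) : ℤ) by push_cast; ring, zpow_neg,
      zpow_natCast]
  constructor
  · convert h7 using 1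
    · exact rfl
    · funext k
      have hyne : y ≠ 0 := hy0.ne'
      have hy1ne : (1 - y) ≠ 0 := hy1.ne'
      have hypne : y ^ (k + 1) ≠ 0 := pow_ne_zero _ hyne
      have hy1pne : (1 - y) ^ (k + 1) ≠ 0 := pow_ne_zero _ hy1ne
      have ey : y * (t / y) ^ (k + 2) = t ^ (k + 2) * (y ^ (k + 1))⁻¹ := by
        rw [div_pow, pow_succ y (k + 1)]
        field_simp
      have ez : (1 - y) * (-(t / (1 - y))) ^ (k + 2)
          = (-1) ^ (k + 2) * (t ^ (k + 2) * ((1 - y) ^ (k + 1))⁻¹) := by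
        rw [neg_pow, div_pow, pow_succ (1 - y) (k + 1)]
        field_simp
      rw [hzpow, hzpow, ← mul_div_assoc, ← mul_div_assoc, ey, ez]
      ring
    · have e1 : 1 - t / y = x / y := by rw [htdef]; field_simp; ring
      have e2 : 1 - -(t / (1 - y)) = (1 - x) / (1 - y) := by rw [htdef]; field_simp; ring
      rw [e1, e2, klBin]
      field_simp
      ring
  · intro k
    rw [hzpow, hzpow]
    have h1 : 0 ≤ t ^ (k + 2) / ((k + 2) * (k + 1) : ℝ) := by positivity
    refine mul_nonneg h1 ?_
    rcases Nat.even_or_odd k with he | ho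
    · have : ((-1 : ℝ)) ^ (k + 2) = 1 := by
        rw [Even.neg_one_pow]; exact he.add (by norm_num)
      rw [this]; positivity
    · have : ((-1 : ℝ)) ^ (k + 2) = -1 := by
        rw [Odd.neg_one_pow]; exact ho.add_even (by norm_num)
      rw [this]
      have hle : (1 - y) ^ (k + 1) ≥ y ^ (k + 1) :=
        pow_le_pow_left₀ hy0.le (by linarith) _
      have := inv_anti₀ (by positivity) hle
      linarith
end

section
/- For every ℓ ∈ ℕ and every θ ∈ ℝ^ℓ, the following identities hold: Σ_{y∈{−1,1}^ℓ} α(θ,y)⁴ = 2^ℓ·∏_{i=1}^{ℓ}(1+6θᵢ²+θᵢ⁴); Σ_{y∈{−1,1}^ℓ} α(θ,y)³·α(θ,−y) = 2^ℓ·∏_{i=1}^{ℓ}(1−θᵢ⁴); Σ_{y∈{−1,1}^ℓ} α(θ,y)²·α(θ,−y)² = 2^ℓ·∏_{i=1}^{ℓ}(1−2θᵢ²+θᵢ⁴); Σ_{y∈{−1,1}^ℓ} α(θ,y)⁵ = 2^ℓ·∏_{i=1}^{ℓ}(1+10θᵢ²+5θᵢ⁴); Σ_{y∈{−1,1}^ℓ}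 α(θ,y)⁴·α(θ,−y) = 2^ℓ·∏_{i=1}^{ℓ}(1+2θᵢ²−3θᵢ⁴); and Σ_{y∈{−1,1}^ℓ} α(θ,y)³·α(θ,−y)² = 2^ℓ·∏_{i=1}^{ℓ}(1−2θᵢ²+θᵢ⁴). -/
/-!
Everything factors over the coordinates: expanding the product over `i` shows that a sum over
`y ∈ {-1, 1}^ℓ` of `∏ i, g i (y i)` is `∏ i, (g i (-1) + g i 1)`, so each moment of `α(θ, y)`
and `α(θ, -y)` is the product of one-variable moments `(1 - t)^m (1 + t)^n + (1 + t)^m (1 - t)^n`,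
each of which is twice the stated polynomial in `t = θᵢ`.
-/

open Finset

section SignMoments

variable {ι R : Type*} [Fintype ι] [DecidableEq ι] [CommRing R] [DecidableEq R]

theorem sum_piFinset_signs_prod_pow_mul_prod_neg_pow (hR : (-1 : R) ≠ 1) (θ : ι → R) (m n : ℕ) :
    ∑ y ∈ Fintype.piFinset (fun _ : ι => ({-1, 1} : Finset R)),
        (∏ i, (1 + θ i * y i)) ^ m * (∏ i, (1 + θ i * (-y i))) ^ n
      = ∏ i, ((1 - θ i) ^ m * (1 + θ i) ^ n + (1 + θ i) ^ m * (1 - θ i) ^ n) := by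
  simp_rw [← prod_pow, ← prod_mul_distrib]
  rw [← prod_univ_sum (fun _ ↦ ({-1, 1} : Finset R))
    fun i t ↦ (1 + θ i * t) ^ m * (1 + θ i * -t) ^ n]
  refine prod_congr rfl fun i _ ↦ ?_
  rw [sum_pair hR]
  ring

theorem sum_piFinset_signs_moment (hR : (-1 : R) ≠ 1) (θ : ι → R) (m n : ℕ) (p : R → R)
    (hp : ∀ t, (1 - t) ^ m * (1 + t) ^ n + (1 + t) ^ m * (1 - t) ^ n = 2 * p t) :
    ∑ y ∈ Fintype.piFinset (fun _ : ι => ({-1, 1} : Finset R)),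
        (∏ i, (1 + θ i * y i)) ^ m * (∏ i, (1 + θ i * (-y i))) ^ n
      = 2 ^ Fintype.card ι * ∏ i, p (θ i) := by
  rw [sum_piFinset_signs_prod_pow_mul_prod_neg_pow hR, ← card_univ, ← prod_const,
    ← prod_mul_distrib]
  exact prod_congr rfl fun i _ ↦ hp (θ i)

end SignMoments

theorem moment_identities_high (ℓ : ℕ) (θ : Fin ℓ → ℝ) :
    (∑ y ∈ Fintype.piFinset (fun _ : Fin ℓ => ({-1, 1} : Finset ℝ)),
        (∏ i, (1 + θ i * y i)) ^ 4) = 2 ^ ℓ * ∏ i, (1 + 6 * θ i ^ 2 + θ i ^ 4) ∧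
    (∑ y ∈ Fintype.piFinset (fun _ : Fin ℓ => ({-1, 1} : Finset ℝ)),
        (∏ i, (1 + θ i * y i)) ^ 3 * ∏ i, (1 + θ i * (-y i)))
      = 2 ^ ℓ * ∏ i, (1 - θ i ^ 4) ∧
    (∑ y ∈ Fintype.piFinset (fun _ : Fin ℓ => ({-1, 1} : Finset ℝ)),
        (∏ i, (1 + θ i * y i)) ^ 2 * (∏ i, (1 + θ i * (-y i))) ^ 2)
      = 2 ^ ℓ * ∏ i, (1 - 2 * θ i ^ 2 + θ i ^ 4) ∧
    (∑ y ∈ Fintype.piFinset (fun _ : Fin ℓ => ({-1, 1} : Finset ℝ)),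
        (∏ i, (1 + θ i * y i)) ^ 5) = 2 ^ ℓ * ∏ i, (1 + 10 * θ i ^ 2 + 5 * θ i ^ 4) ∧
    (∑ y ∈ Fintype.piFinset (fun _ : Fin ℓ => ({-1, 1} : Finset ℝ)),
        (∏ i, (1 + θ i * y i)) ^ 4 * ∏ i, (1 + θ i * (-y i)))
      = 2 ^ ℓ * ∏ i, (1 + 2 * θ i ^ 2 - 3 * θ i ^ 4) ∧
    (∑ y ∈ Fintype.piFinset (fun _ : Fin ℓ => ({-1, 1} : Finset ℝ)),
        (∏ i, (1 + θ i * y i)) ^ 3 * (∏ i, (1 + θ i * (-y i))) ^ 2)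
      = 2 ^ ℓ * ∏ i, (1 - 2 * θ i ^ 2 + θ i ^ 4) := by
  have moment (m n : ℕ) (p : ℝ → ℝ)
      (hp : ∀ t, (1 - t) ^ m * (1 + t) ^ n + (1 + t) ^ m * (1 - t) ^ n = 2 * p t) :=
    Fintype.card_fin ℓ ▸ sum_piFinset_signs_moment (by norm_num) θ m n p hp
  refine ⟨?_, ?_, ?_, ?_, ?_, ?_⟩
  · simpa using moment 4 0 (fun t ↦ 1 + 6 * t ^ 2 + t ^ 4) fun t ↦ by ring
  · simpa using moment 3 1 (fun t ↦ 1 - t ^ 4) fun t ↦ by ring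
  · exact moment 2 2 (fun t ↦ 1 - 2 * t ^ 2 + t ^ 4) fun t ↦ by ring
  · simpa using moment 5 0 (fun t ↦ 1 + 10 * t ^ 2 + 5 * t ^ 4) fun t ↦ by ring
  · simpa using moment 4 1 (fun t ↦ 1 + 2 * t ^ 2 - 3 * t ^ 4) fun t ↦ by ring
  · exact moment 3 2 (fun t ↦ 1 - 2 * t ^ 2 + t ^ 4) fun t ↦ by ring
end

section
/- For all natural numbers d and m and every real x ≥ 0 with d·x ≤ 1, one has 0 ≤ (1+x)^d − Σ_{i=0}^{m} C(d,i)·x^i ≤ e·(d·x)^{m+1}/(m+1)!. -/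
/-
Expanding by the binomial theorem, the difference is the tail `∑_{i > m} C(d,i) x^i`, a sum of
nonnegative terms. Since `C(d,i) ≤ d^i / i!`, each term is at most `t^i / i!` with `t = d x`, and
`(m+1+j)! ≥ (m+1)! j!` lets us factor out `t^(m+1) / (m+1)!`, leaving a partial sum of the
exponential series at `t ≤ 1`, which is at most `exp t ≤ e`.
-/

open Finset Nat

theorem one_add_pow_eq_sum_range_choose_mul_pow {R : Type*} [CommSemiring R] (x : R) {d N : ℕ}
    (hdN : d < N) : (1 + x) ^ d = ∑ i ∈ range N, (d.choose i : R) * x ^ i := by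
  rw [add_comm, add_pow, sum_subset (range_subset_range.2 hdN)]
  · exact sum_congr rfl fun i _ => by rw [one_pow, mul_one, mul_comm]
  · intro i _ hi
    rw [choose_eq_zero_of_lt (by simpa using hi), cast_zero, mul_zero]

theorem one_add_pow_sub_sum_range_choose_mul_pow {R : Type*} [CommRing R] (x : R) (d n : ℕ) :
    (1 + x) ^ d - ∑ i ∈ range n, (d.choose i : R) * x ^ i =
      ∑ j ∈ range (d + 1), (d.choose (n + j) : R) * x ^ (n + j) := by
  rw [one_add_pow_eq_sum_range_choose_mul_pow x (by omega : d < n + (d + 1)), sum_range_add,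
    add_sub_cancel_left]

section

variable {α : Type*} [Field α] [LinearOrder α] [IsStrictOrderedRing α]

theorem choose_mul_pow_le_pow_div_factorial {x : α} (hx : 0 ≤ x) (d i : ℕ) :
    (d.choose i : α) * x ^ i ≤ ((d : α) * x) ^ i / i ! :=
  calc (d.choose i : α) * x ^ i ≤ ((d : α) ^ i / i !) * x ^ i := by
        gcongr; exact choose_le_pow_div i d
    _ = ((d : α) * x) ^ i / i ! := by rw [mul_pow]; ring

theorem pow_div_factorial_add_le {t : α} (ht : 0 ≤ t) (m j : ℕ) :
    t ^ (m + j) / (m + j)! ≤ t ^ m / m ! * (t ^ j / j !) := by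
  have hfac : (m ! * j ! : α) ≤ (m + j)! := by
    exact_mod_cast le_of_dvd (factorial_pos _) (factorial_mul_factorial_dvd_factorial_add m j)
  rw [pow_add, div_mul_div_comm (t ^ m)]
  exact div_le_div_of_nonneg_left (by positivity) (by positivity) hfac

end

theorem sum_range_pow_div_factorial_add_le_mul_exp {t : ℝ} (ht : 0 ≤ t) (m k : ℕ) :
    ∑ j ∈ range k, t ^ (m + j) / (m + j)! ≤ t ^ m / m ! * Real.exp t :=
  calc ∑ j ∈ range k, t ^ (m + j) / (m + j)!
      ≤ ∑ j ∈ range k, t ^ m / m ! * (t ^ j / j !) :=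
        sum_le_sum fun j _ => pow_div_factorial_add_le ht m j
    _ = t ^ m / m ! * ∑ j ∈ range k, t ^ j / j ! := by rw [mul_sum]
    _ ≤ t ^ m / m ! * Real.exp t := by
        gcongr; exact Real.sum_le_exp_of_nonneg ht k

theorem binom_series_tail_bound (d m : ℕ) (x : ℝ) (hx : 0 ≤ x) (hdx : (d : ℝ) * x ≤ 1) :
    0 ≤ (1 + x) ^ d - ∑ i ∈ Finset.range (m + 1), (d.choose i : ℝ) * x ^ i ∧
    (1 + x) ^ d - ∑ i ∈ Finset.range (m + 1), (d.choose i : ℝ) * x ^ i ≤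
      Real.exp 1 * ((d : ℝ) * x) ^ (m + 1) / (m + 1).factorial := by
  have ht : 0 ≤ (d : ℝ) * x := by positivity
  rw [one_add_pow_sub_sum_range_choose_mul_pow]
  refine ⟨sum_nonneg fun j _ => by positivity, ?_⟩
  calc ∑ j ∈ range (d + 1), (d.choose (m + 1 + j) : ℝ) * x ^ (m + 1 + j)
      ≤ ∑ j ∈ range (d + 1), ((d : ℝ) * x) ^ (m + 1 + j) / (m + 1 + j).factorial :=
        sum_le_sum fun j _ => choose_mul_pow_le_pow_div_factorial hx d _
    _ ≤ ((d : ℝ) * x) ^ (m + 1) / (m + 1).factorial * Real.exp ((d : ℝ) * x) :=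
        sum_range_pow_div_factorial_add_le_mul_exp ht _ _
    _ ≤ ((d : ℝ) * x) ^ (m + 1) / (m + 1).factorial * Real.exp 1 := by gcongr
    _ = Real.exp 1 * ((d : ℝ) * x) ^ (m + 1) / (m + 1).factorial := by ring
end
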